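/- arXiv:1607.04028 — 2 statements merged into one kernel-verified Lean document; each statement's English description precedes it below -/
import Mathlib

section
/- Let n ≥ 2, let σ be a scattering kernel with lower bound σ₀ > 0 and let p be a path-length density. Suppose u ∈ L^∞(0,∞; L²(ℝⁿ × S^{n-1})) satisfies u ≥ 0 a.e. and u(s,x,v) = ∫₀^∞ ∫_{S^{n-1}} σ(v·v') p(τ) u(τ,x,v') dv' dτ for a.e. (s,x,v) ∈ (0,∞) × ℝⁿ × S^{n-1}. Then u is a.e. independent of s and v: there exists U ∈ L²(ℝⁿ) with u(s,x,v) = U(x) for a.e. (s,x,v). -/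
open MeasureTheory Metric Filter Set
open scoped ENNReal

noncomputable section

/-- Euclidean space `ℝⁿ`. -/
abbrev Euc (n : ℕ) := EuclideanSpace ℝ (Fin n)

/-- The unit sphere `S^{n-1}` in `ℝⁿ`. -/
abbrev Sph (n : ℕ) := Metric.sphere (0 : Euc n) 1

/-- The normalized surface measure on the unit sphere (total mass `1`): the surface
measure divided by its total mass. -/
noncomputable def sphμ (n : ℕ) : Measure (Sph n) :=
  ((volume : Measure (Euc n)).toSphere Set.univ)⁻¹ • (volume : Measure (Euc n)).toSphere

/-- A scattering kernel `σ` with lower bound `σ₀`: measurable, bounded below by `σ₀ > 0`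
on `[-1,1]`, and with unit angular integral `∫_{S^{n-1}} σ(v·v') dv = 1` for every `v'`. -/
def IsScatteringKernel (n : ℕ) (σ₀ : ℝ) (σ : ℝ → ℝ) : Prop :=
  Measurable σ ∧ 0 < σ₀ ∧ (∀ μ ∈ Set.Icc (-1 : ℝ) 1, σ₀ ≤ σ μ) ∧
    ∀ v' : Sph n, ∫ v, σ (inner ℝ (v : Euc n) (v' : Euc n)) ∂(sphμ n) = 1

/-- A path-length density: measurable, nonnegative, integrating to one on `(0,∞)`, with
finite first moment. -/
def IsPathDensity (p : ℝ → ℝ) : Prop :=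
  Measurable p ∧ (∀ s, 0 ≤ p s) ∧ (∫ s in Set.Ioi (0 : ℝ), p s = 1) ∧
    IntegrableOn (fun s => s * p s) (Set.Ioi (0 : ℝ))

/-- The norm of `L^∞(0,∞; L^q(ℝⁿ × S^{n-1}))`: essential supremum over `s ∈ (0,∞)` of the
`L^q(ℝⁿ × S^{n-1})` norm of `u(s,·,·)`. -/
noncomputable def mixedNorm (n : ℕ) (q : ℝ≥0∞) (u : ℝ → Euc n → Sph n → ℝ) : ℝ≥0∞ :=
  essSup
    (fun s => eLpNorm (fun xv : Euc n × Sph n => u s xv.1 xv.2) q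
      ((volume : Measure (Euc n)).prod (sphμ n)))
    (volume.restrict (Set.Ioi (0 : ℝ)))

/-- The transport fixed-point equation
`Ψ(s,x,v) = ∫₀^∞ ∫_{S^{n-1}} (σ(v·v') − θ(ε)(1−c)) p(τ) Ψ(τ, x − εvs, v') dv' dτ
  + θ(ε) Q(x − εvs, v)` for a.e. `(s,x,v) ∈ (0,∞) × ℝⁿ × S^{n-1}`. -/
def IsTransportSolution (n : ℕ) (ε θε c : ℝ) (σ p : ℝ → ℝ)
    (Q : Euc n → Sph n → ℝ) (Ψ : ℝ → Euc n → Sph n → ℝ) : Prop :=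
  ∀ᵐ sxv : ℝ × Euc n × Sph n
      ∂((volume.restrict (Set.Ioi (0 : ℝ))).prod ((volume : Measure (Euc n)).prod (sphμ n))),
    Ψ sxv.1 sxv.2.1 sxv.2.2 =
      (∫ τ in Set.Ioi (0 : ℝ), ∫ v' : Sph n,
          (σ (inner ℝ (sxv.2.2 : Euc n) (v' : Euc n)) - θε * (1 - c)) * p τ *
            Ψ τ (sxv.2.1 - (ε * sxv.1) • (sxv.2.2 : Euc n)) v' ∂(sphμ n))
        + θε * Q (sxv.2.1 - (ε * sxv.1) • (sxv.2.2 : Euc n)) sxv.2.2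

/-! Integrating the fixed-point equation against the path-length density (of mass one) shows
that its right-hand side `F(x, v)` does not depend on `s`, that `u = F` a.e., and that for a.e. `x`
the section `F(x, ·)` is an integrable fixed point of the angular kernel `σ(v·v')`. This kernel is
doubly stochastic on the probability space `S^{n-1}` and bounded below by `σ₀ > 0`, so by
Doeblin's argument `f ↦ ∫ (σ(v·v') - σ₀) f(v') dv'` contracts mean-zero functions of `L¹` by the
factor `1 - σ₀`; hence `F(x, ·)` equals its mean `U(x)`. Finally `U ∈ L²` because `F` coincides
with a section `u(s, ·, ·)`, whose `L²` norm is bounded by the `L^∞(L²)` norm of `u`. -/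

section KernelContraction

variable {V : Type*} [MeasurableSpace V] {μ : Measure V}

theorem lintegral_lintegral_mul_eq_of_lintegral_left_eq [SFinite μ] {k : V → V → ℝ≥0∞}
    (hk : Measurable (Function.uncurry k)) {c : ℝ≥0∞} (hkc : ∀ v', ∫⁻ v, k v v' ∂μ = c)
    {g : V → ℝ≥0∞} (hg : AEMeasurable g μ) :
    ∫⁻ v, ∫⁻ v', k v v' * g v' ∂μ ∂μ = c * ∫⁻ v', g v' ∂μ := by
  rw [lintegral_lintegral_swap (hk.aemeasurable.mul (hg.comp_quasiMeasurePreserving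
    Measure.quasiMeasurePreserving_snd)), ← lintegral_const_mul'' c hg]
  refine lintegral_congr fun v' => ?_
  have hkv : Measurable (k · v') := hk.comp measurable_prodMk_right
  rw [lintegral_mul_const _ hkv, hkc]

variable [IsProbabilityMeasure μ] {K : V → V → ℝ}

theorem lintegral_enorm_sub_eq_of_integral_left_eq_one {a : ℝ} (hKa : ∀ v v', a ≤ K v v')
    (hK1 : ∀ v', ∫ v, K v v' ∂μ = 1) (v' : V) :
    ∫⁻ v, ‖K v v' - a‖ₑ ∂μ = ENNReal.ofReal (1 - a) := by
  have hK : Integrable (K · v') μ := .of_integral_ne_zero (by simp [hK1 v'])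
  calc ∫⁻ v, ‖K v v' - a‖ₑ ∂μ = ∫⁻ v, ENNReal.ofReal (K v v' - a) ∂μ :=
        lintegral_congr fun v => Real.enorm_of_nonneg (sub_nonneg.2 (hKa v v'))
    _ = ENNReal.ofReal (∫ v, (K v v' - a) ∂μ) :=
        (ofReal_integral_eq_lintegral_ofReal (hK.sub (integrable_const a))
          (ae_of_all _ fun v => sub_nonneg.2 (hKa v v'))).symm
    _ = ENNReal.ofReal (1 - a) := by
        rw [integral_sub hK (integrable_const a), hK1 v', integral_const]; simp

theorem ae_integrable_mul_of_integral_left_eq_one (hK : Measurable (Function.uncurry K))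
    (hK0 : ∀ v v', 0 ≤ K v v') (hK1 : ∀ v', ∫ v, K v v' ∂μ = 1) {f : V → ℝ}
    (hf : Integrable f μ) : ∀ᵐ v ∂μ, Integrable (fun v' => K v v' * f v') μ := by
  have hKf : AEStronglyMeasurable (fun q : V × V => K q.1 q.2 * f q.2) (μ.prod μ) :=
    hK.aestronglyMeasurable.mul
      (hf.1.comp_quasiMeasurePreserving Measure.quasiMeasurePreserving_snd)
  refine Integrable.prod_right_ae (f := fun q : V × V => K q.1 q.2 * f q.2) ⟨hKf, ?_⟩
  rw [hasFiniteIntegral_iff_enorm, lintegral_prod _ hKf.enorm]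
  simp_rw [enorm_mul]
  rw [lintegral_lintegral_mul_eq_of_lintegral_left_eq hK.enorm
    (by simpa using lintegral_enorm_sub_eq_of_integral_left_eq_one hK0 hK1) hf.1.enorm, one_mul]
  exact hf.2

theorem ae_eq_integral_of_eq_integral_mul {σ₀ : ℝ} (hσ₀ : 0 < σ₀)
    (hK : Measurable (Function.uncurry K)) (hKσ₀ : ∀ v v', σ₀ ≤ K v v')
    (hK1 : ∀ v', ∫ v, K v v' ∂μ = 1) (hK2 : ∀ v, ∫ v', K v v' ∂μ = 1) {f : V → ℝ}
    (hf : Integrable f μ) (hfix : ∀ᵐ v ∂μ, f v = ∫ v', K v v' * f v' ∂μ) :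
    f =ᵐ[μ] fun _ => ∫ v, f v ∂μ := by
  set m := ∫ v, f v ∂μ
  have hfm : Integrable (fun v => f v - m) μ := hf.sub (integrable_const m)
  have hfm0 : ∫ v, (f v - m) ∂μ = 0 := by
    rw [integral_sub hf (integrable_const m), integral_const]; simp [m]
  -- Since `∫ (f - m) = 0`, lowering the kernel by `σ₀` keeps `f - m` a fixed point.
  have hfix' : ∀ᵐ v ∂μ, f v - m = ∫ v', (K v v' - σ₀) * (f v' - m) ∂μ := by
    filter_upwards [hfix, ae_integrable_mul_of_integral_left_eq_one hK
      (fun v v' => hσ₀.le.trans (hKσ₀ v v')) hK1 hf] with v hv hKf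
    have hKv : Integrable (K v) μ := .of_integral_ne_zero (by simp [hK2 v])
    have e : (fun v' => (K v v' - σ₀) * (f v' - m))
        = fun v' => (K v v' * f v' - m * K v v') - σ₀ * (f v' - m) := by
      funext v'; ring
    have hKfm : Integrable (fun v' => K v v' * f v' - m * K v v') μ := hKf.sub (hKv.const_mul m)
    rw [e, integral_sub hKfm (hfm.const_mul σ₀),
      integral_sub hKf (hKv.const_mul m), integral_const_mul, integral_const_mul, hK2 v, hfm0,
      ← hv]
    ring
  set I := ∫⁻ v, ‖f v - m‖ₑ ∂μ
  have hI : I ≤ ENNReal.ofReal (1 - σ₀) * I :=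
    calc I ≤ ∫⁻ v, ∫⁻ v', ‖K v v' - σ₀‖ₑ * ‖f v' - m‖ₑ ∂μ ∂μ := by
          refine lintegral_mono_ae (hfix'.mono fun v hv => ?_)
          rw [hv]
          exact (enorm_integral_le_lintegral_enorm _).trans_eq (by simp only [enorm_mul])
      _ = ENNReal.ofReal (1 - σ₀) * I :=
          lintegral_lintegral_mul_eq_of_lintegral_left_eq (hK.sub measurable_const).enorm
            (lintegral_enorm_sub_eq_of_integral_left_eq_one hKσ₀ hK1) hfm.1.enorm
  have hI0 : I = 0 := by
    by_contra hI0
    exact (hI.trans_lt ((ENNReal.mul_lt_mul_left hI0 hfm.2.ne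
      (ENNReal.ofReal_lt_one.2 (by linarith))).trans_eq (one_mul I))).false
  filter_upwards [(lintegral_eq_zero_iff' hfm.1.enorm).1 hI0] with v hv
  simpa [sub_eq_zero] using hv

end KernelContraction

theorem isProbabilityMeasure_sphμ {n : ℕ} (hn : 0 < n) : IsProbabilityMeasure (sphμ n) := by
  constructor
  have hball : volume (ball (0 : Euc n) 1) ≠ 0 := (measure_ball_pos _ _ one_pos).ne'
  rw [sphμ, Measure.smul_apply, smul_eq_mul, Measure.toSphere_apply_univ]
  refine ENNReal.inv_mul_cancel ?_ ?_
  · simpa [finrank_euclideanSpace] using ⟨hn.ne', hball⟩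
  · exact ENNReal.mul_ne_top (ENNReal.natCast_ne_top _) measure_ball_lt_top.ne

theorem inner_mem_Icc_of_sphere {n : ℕ} (v v' : Sph n) :
    inner ℝ (v : Euc n) (v' : Euc n) ∈ Icc (-1 : ℝ) 1 := by
  simpa using abs_le.1 (abs_real_inner_le_norm (v : Euc n) (v' : Euc n))

namespace IsScatteringKernel

variable {n : ℕ} {σ₀ : ℝ} {σ : ℝ → ℝ}

theorem measurable_uncurry (hσ : IsScatteringKernel n σ₀ σ) :
    Measurable (Function.uncurry fun v v' : Sph n => σ (inner ℝ (v : Euc n) (v' : Euc n))) :=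
  hσ.1.comp ((continuous_subtype_val.comp continuous_fst).inner
    (continuous_subtype_val.comp continuous_snd)).measurable

theorem integral_right (hσ : IsScatteringKernel n σ₀ σ) (v : Sph n) :
    ∫ v', σ (inner ℝ (v : Euc n) (v' : Euc n)) ∂(sphμ n) = 1 := by
  simpa only [real_inner_comm] using hσ.2.2.2 v

theorem ae_eq_integral_of_eq_integral_mul [IsProbabilityMeasure (sphμ n)]
    (hσ : IsScatteringKernel n σ₀ σ) {f : Sph n → ℝ} (hf : Integrable f (sphμ n))
    (hfix : ∀ᵐ v ∂(sphμ n), f v = ∫ v', σ (inner ℝ (v : Euc n) (v' : Euc n)) * f v' ∂(sphμ n)) :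
    f =ᵐ[sphμ n] fun _ => ∫ v, f v ∂(sphμ n) :=
  _root_.ae_eq_integral_of_eq_integral_mul hσ.2.1 hσ.measurable_uncurry
    (fun v v' => hσ.2.2.1 _ (inner_mem_Icc_of_sphere v v')) hσ.2.2.2 hσ.integral_right hf hfix

end IsScatteringKernel

theorem ae_ae_ae_of_ae_prod_prod {α β γ : Type*} [MeasurableSpace α] [MeasurableSpace β]
    [MeasurableSpace γ] {μ : Measure α} {ν : Measure β} {ρ : Measure γ} [SFinite μ] [SFinite ν]
    [SFinite ρ] {P : α → β → γ → Prop} (h : ∀ᵐ q ∂μ.prod (ν.prod ρ), P q.1 q.2.1 q.2.2) :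
    ∀ᵐ b ∂ν, ∀ᵐ a ∂μ, ∀ᵐ c ∂ρ, P a b c := by
  have hswap : MeasurePreserving (fun q : β × α × γ => (q.2.1, q.1, q.2.2))
      (ν.prod (μ.prod ρ)) (μ.prod (ν.prod ρ)) :=
    ((measurePreserving_prodAssoc μ ν ρ).comp
      (Measure.measurePreserving_swap.prod (MeasurePreserving.id ρ))).comp
      (measurePreserving_prodAssoc ν μ ρ).symm
  exact (Measure.ae_ae_of_ae_prod (hswap.quasiMeasurePreserving.ae h)).mono
    fun _ hb => Measure.ae_ae_of_ae_prod hb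

theorem memLp_of_mixedNorm_lt_top {n : ℕ} [SFinite (sphμ n)] {q : ℝ≥0∞}
    {u : ℝ → Euc n → Sph n → ℝ}
    (hu : mixedNorm n q u < ⊤) {G : Euc n × Sph n → ℝ}
    (hG : AEStronglyMeasurable G ((volume : Measure (Euc n)).prod (sphμ n)))
    (huG : ∀ᵐ sxv : ℝ × Euc n × Sph n
        ∂((volume.restrict (Ioi (0 : ℝ))).prod ((volume : Measure (Euc n)).prod (sphμ n))),
      u sxv.1 sxv.2.1 sxv.2.2 = G sxv.2) :
    MemLp G q ((volume : Measure (Euc n)).prod (sphμ n)) := by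
  have : (ae (volume.restrict (Ioi (0 : ℝ)))).NeBot :=
    ae_restrict_neBot.2 (by simp [Real.volume_Ioi])
  obtain ⟨s, hsG, hs⟩ := ((Measure.ae_ae_of_ae_prod huG).and
    (ENNReal.ae_le_essSup _)).exists
  exact ⟨hG, ((eLpNorm_congr_ae hsG).symm.trans_le hs).trans_lt hu⟩

theorem memLp_integral_and_ae_eq_of_ae_eq_integral {α β : Type*} [MeasurableSpace α]
    [MeasurableSpace β] {μ : Measure α} {ν : Measure β} [SFinite μ] [IsProbabilityMeasure ν]
    {p : ℝ≥0∞} {F : α → β → ℝ} (hF : StronglyMeasurable (Function.uncurry F))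
    (hFp : MemLp (Function.uncurry F) p (μ.prod ν))
    (hconst : ∀ᵐ x ∂μ, F x =ᵐ[ν] fun _ => ∫ y, F x y ∂ν) :
    MemLp (fun x => ∫ y, F x y ∂ν) p μ ∧
      Function.uncurry F =ᵐ[μ.prod ν] fun q => ∫ y, F q.1 y ∂ν := by
  have hg : StronglyMeasurable fun x => ∫ y, F x y ∂ν := hF.integral_prod_right'
  have hFg : Function.uncurry F =ᵐ[μ.prod ν] fun q => ∫ y, F q.1 y ∂ν :=
    (Measure.ae_prod_iff_ae_ae (measurableSet_eq_fun hF.measurable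
      (hg.measurable.comp measurable_fst))).2 hconst
  refine ⟨⟨hg.aestronglyMeasurable, ?_⟩, hFg⟩
  rw [← eLpNorm_comp_measurePreserving hg.aestronglyMeasurable
    (measurePreserving_fst (μ := μ) (ν := ν))]
  exact (hFp.ae_eq hFg).2

def averagingOp (n : ℕ) (σ p : ℝ → ℝ) (u : ℝ → Euc n → Sph n → ℝ) : Euc n → Sph n → ℝ :=
  fun x v => ∫ τ in Ioi (0 : ℝ), ∫ v' : Sph n,
    σ (inner ℝ (v : Euc n) (v' : Euc n)) * p τ * u τ x v' ∂(sphμ n)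

section AveragingOp

variable {n : ℕ} {σ p : ℝ → ℝ} {u : ℝ → Euc n → Sph n → ℝ}

theorem stronglyMeasurable_averagingOp [SFinite (sphμ n)] (hσ : Measurable σ) (hp : Measurable p)
    (hu : Measurable fun sxv : ℝ × Euc n × Sph n => u sxv.1 sxv.2.1 sxv.2.2) :
    StronglyMeasurable (Function.uncurry (averagingOp n σ p u)) := by
  have hinner : Measurable fun q : ((Euc n × Sph n) × ℝ) × Sph n =>
      inner ℝ (q.1.1.2 : Euc n) (q.2 : Euc n) :=
    (continuous_subtype_val.comp (continuous_snd.comp (continuous_fst.comp continuous_fst))).inner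
      (continuous_subtype_val.comp continuous_snd) |>.measurable
  have hint : Measurable fun q : ((Euc n × Sph n) × ℝ) × Sph n =>
      σ (inner ℝ (q.1.1.2 : Euc n) (q.2 : Euc n)) * p q.1.2 * u q.1.2 q.1.1.1 q.2 :=
    ((hσ.comp hinner).mul (hp.comp measurable_fst.snd)).mul
      (hu.comp (measurable_fst.snd.prodMk (measurable_fst.fst.fst.prodMk measurable_snd)))
  exact (hint.stronglyMeasurable.integral_prod_right' (ν := sphμ n)).integral_prod_right'
    (ν := volume.restrict (Ioi (0 : ℝ)))

theorem averagingOp_eq_integral_mul (hp1 : ∫ τ in Ioi (0 : ℝ), p τ = 1) {x : Euc n}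
    {g : Sph n → ℝ} (hug : ∀ᵐ τ ∂(volume.restrict (Ioi (0 : ℝ))), u τ x =ᵐ[sphμ n] g)
    (v : Sph n) :
    averagingOp n σ p u x v = ∫ v', σ (inner ℝ (v : Euc n) (v' : Euc n)) * g v' ∂(sphμ n) := by
  calc averagingOp n σ p u x v
      = ∫ τ in Ioi (0 : ℝ),
          p τ * ∫ v', σ (inner ℝ (v : Euc n) (v' : Euc n)) * g v' ∂(sphμ n) := by
        refine integral_congr_ae (hug.mono fun τ hτ => ?_)
        dsimp only
        rw [← integral_const_mul]
        refine integral_congr_ae (hτ.mono fun v' hv' => ?_)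
        simp only [hv']
        ring
    _ = _ := by rw [integral_mul_const, hp1, one_mul]

end AveragingOp

theorem averaging_fixed_point_constant_general
    (n : ℕ) (hn : 2 ≤ n) (σ₀ : ℝ)
    (σ p : ℝ → ℝ) (hσ : IsScatteringKernel n σ₀ σ) (hp : IsPathDensity p)
    (u : ℝ → Euc n → Sph n → ℝ)
    (hum : Measurable fun sxv : ℝ × Euc n × Sph n => u sxv.1 sxv.2.1 sxv.2.2)
    (hunorm : mixedNorm n 2 u < ⊤)
    (hufix : ∀ᵐ sxv : ℝ × Euc n × Sph n
        ∂((volume.restrict (Set.Ioi (0 : ℝ))).prod ((volume : Measure (Euc n)).prod (sphμ n))),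
      u sxv.1 sxv.2.1 sxv.2.2 =
        ∫ τ in Set.Ioi (0 : ℝ), ∫ v' : Sph n,
          σ (inner ℝ (sxv.2.2 : Euc n) (v' : Euc n)) * p τ * u τ sxv.2.1 v' ∂(sphμ n)) :
    ∃ U : Euc n → ℝ, MemLp U 2 (volume : Measure (Euc n)) ∧
      (∀ᵐ sxv : ℝ × Euc n × Sph n
          ∂((volume.restrict (Set.Ioi (0 : ℝ))).prod ((volume : Measure (Euc n)).prod (sphμ n))),
        u sxv.1 sxv.2.1 sxv.2.2 = U sxv.2.1) := by
  have : IsProbabilityMeasure (sphμ n) := isProbabilityMeasure_sphμ (by omega)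
  set F := averagingOp n σ p u
  have hF := stronglyMeasurable_averagingOp hσ.1 hp.1 hum
  have hFL2 : MemLp (Function.uncurry F) 2 ((volume : Measure (Euc n)).prod (sphμ n)) :=
    memLp_of_mixedNorm_lt_top hunorm hF.aestronglyMeasurable hufix
  have hsection : ∀ᵐ x ∂(volume : Measure (Euc n)), Integrable (F x) (sphμ n) :=
    hFL2.integrable_sq.prod_right_ae.mono fun x hx =>
      ((memLp_two_iff_integrable_sq
        (hF.measurable.comp measurable_prodMk_left).aestronglyMeasurable).2 hx).integrable
          one_le_two
  have hconst : ∀ᵐ x ∂(volume : Measure (Euc n)),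
      F x =ᵐ[sphμ n] fun _ => ∫ v, F x v ∂(sphμ n) := by
    filter_upwards [ae_ae_ae_of_ae_prod_prod (P := fun s x v => u s x v = F x v) hufix, hsection]
      with x hux hFx
    exact hσ.ae_eq_integral_of_eq_integral_mul hFx
      (ae_of_all _ (averagingOp_eq_integral_mul hp.2.2.1 hux))
  obtain ⟨hUL2, hFU⟩ := memLp_integral_and_ae_eq_of_ae_eq_integral hF hFL2 hconst
  refine ⟨_, hUL2, ?_⟩
  filter_upwards [hufix, Measure.quasiMeasurePreserving_snd.ae hFU] with sxv hu hU
  exact hu.trans hU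

/-- nonnegative fixed points of the averaging operator are independent
of `s` and `v`. -/
theorem averaging_fixed_point_constant
    (n : ℕ) (hn : 2 ≤ n) (σ₀ : ℝ)
    (σ p : ℝ → ℝ) (hσ : IsScatteringKernel n σ₀ σ) (hp : IsPathDensity p)
    (u : ℝ → Euc n → Sph n → ℝ)
    (hum : Measurable fun sxv : ℝ × Euc n × Sph n => u sxv.1 sxv.2.1 sxv.2.2)
    (hunorm : mixedNorm n 2 u < ⊤)
    (hupos : ∀ᵐ sxv : ℝ × Euc n × Sph n
        ∂((volume.restrict (Set.Ioi (0 : ℝ))).prod ((volume : Measure (Euc n)).prod (sphμ n))),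
      0 ≤ u sxv.1 sxv.2.1 sxv.2.2)
    (hufix : ∀ᵐ sxv : ℝ × Euc n × Sph n
        ∂((volume.restrict (Set.Ioi (0 : ℝ))).prod ((volume : Measure (Euc n)).prod (sphμ n))),
      u sxv.1 sxv.2.1 sxv.2.2 =
        ∫ τ in Set.Ioi (0 : ℝ), ∫ v' : Sph n,
          σ (inner ℝ (sxv.2.2 : Euc n) (v' : Euc n)) * p τ * u τ sxv.2.1 v' ∂(sphμ n)) :
    ∃ U : Euc n → ℝ, MemLp U 2 (volume : Measure (Euc n)) ∧
      (∀ᵐ sxv : ℝ × Euc n × Sph n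
          ∂((volume.restrict (Set.Ioi (0 : ℝ))).prod ((volume : Measure (Euc n)).prod (sphμ n))),
        u sxv.1 sxv.2.1 sxv.2.2 = U sxv.2.1) :=
  averaging_fixed_point_constant_general n hn σ₀ σ p hσ hp u hum hunorm hufix
end
end

section
/- Let n ≥ 2 and let σ be a scattering kernel with lower bound σ₀ > 0. If u ∈ L²(S^{n-1}) satisfies u(v) = ∫_{S^{n-1}} σ(v·v') u(v') dv' for a.e. v ∈ S^{n-1}, then u is a.e. equal to a constant. Equivalently, the null space of L = I − K, where (K u)(v) = ∫_{S^{n-1}} σ(v·v') u(v') dv', is the span of the constant function 1. -/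
open MeasureTheory Metric Filter Set
open scoped ENNReal

noncomputable section

/-! The kernel `K(v, v') = σ(v·v')` is positive and doubly stochastic on the sphere, so for
`f ∈ L²` the identity `∬ K(x, y) (f x - f y)² = 2 (∫ f² - ∫ f · K f)` holds. For a fixed point
`f = K f` the right side vanishes, and as `K > 0` this forces `f x = f y` for almost every pair
`(x, y)`: `f` is a.e. constant. -/

section DoublyStochasticKernel

variable {α : Type*} [MeasurableSpace α] {μ : Measure α} [SFinite μ] {K : α × α → ℝ}

theorem exists_ae_eq_const_of_ae_prod_eq {β : Type*} [Nonempty β] {f : α → β}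
    (h : ∀ᵐ p ∂μ.prod μ, f p.1 = f p.2) : ∃ a, f =ᵐ[μ] fun _ => a := by
  rcases eq_or_ne μ 0 with rfl | hμ
  · exact ⟨Classical.arbitrary β, by simp [EventuallyEq]⟩
  · have := ae_neBot.2 hμ
    obtain ⟨x, hx⟩ := (Measure.ae_ae_of_ae_prod h).exists
    exact ⟨f x, hx.mono fun _ hy => hy.symm⟩

theorem integrable_kernel_mul_comp_fst (hK : AEStronglyMeasurable K (μ.prod μ))
    (hK0 : ∀ p, 0 ≤ K p) (hrow : ∀ x, ∫ y, K (x, y) ∂μ = 1) {g : α → ℝ}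
    (hg : Integrable g μ) : Integrable (fun p => K p * g p.1) (μ.prod μ) := by
  refine (integrable_prod_iff (f := fun p => K p * g p.1) (hK.mul hg.1.comp_fst)).2
    ⟨ae_of_all _ fun x => (integrable_of_integral_eq_one (hrow x)).mul_const (g x), ?_⟩
  simpa only [norm_mul, Real.norm_of_nonneg (hK0 _), integral_mul_const, hrow, one_mul]
    using hg.norm

theorem integrable_kernel_mul_comp_snd (hK : AEStronglyMeasurable K (μ.prod μ))
    (hK0 : ∀ p, 0 ≤ K p) (hcol : ∀ y, ∫ x, K (x, y) ∂μ = 1) {g : α → ℝ}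
    (hg : Integrable g μ) : Integrable (fun p => K p * g p.2) (μ.prod μ) :=
  (integrable_kernel_mul_comp_fst (K := K ∘ Prod.swap) hK.prod_swap (fun _ => hK0 _) hcol
    hg).swap

theorem integral_kernel_mul_comp_fst (hK : AEStronglyMeasurable K (μ.prod μ))
    (hK0 : ∀ p, 0 ≤ K p) (hrow : ∀ x, ∫ y, K (x, y) ∂μ = 1) {g : α → ℝ}
    (hg : Integrable g μ) : ∫ p, K p * g p.1 ∂μ.prod μ = ∫ x, g x ∂μ := by
  rw [integral_prod _ (integrable_kernel_mul_comp_fst hK hK0 hrow hg)]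
  simp only [integral_mul_const, hrow, one_mul]

theorem integral_kernel_mul_comp_snd (hK : AEStronglyMeasurable K (μ.prod μ))
    (hK0 : ∀ p, 0 ≤ K p) (hcol : ∀ y, ∫ x, K (x, y) ∂μ = 1) {g : α → ℝ}
    (hg : Integrable g μ) : ∫ p, K p * g p.2 ∂μ.prod μ = ∫ x, g x ∂μ := by
  rw [← integral_prod_swap]
  exact integral_kernel_mul_comp_fst (K := K ∘ Prod.swap) hK.prod_swap (fun _ => hK0 _) hcol hg

variable (hK : AEStronglyMeasurable K (μ.prod μ)) (hK0 : ∀ p, 0 ≤ K p)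
  (hrow : ∀ x, ∫ y, K (x, y) ∂μ = 1) (hcol : ∀ y, ∫ x, K (x, y) ∂μ = 1)
  {f : α → ℝ} (hf : MemLp f 2 μ)
include hK hK0 hrow hcol hf

theorem integrable_kernel_mul_mul :
    Integrable (fun p => K p * (f p.1 * f p.2)) (μ.prod μ) := by
  refine ((integrable_kernel_mul_comp_fst hK hK0 hrow hf.integrable_sq).add
    (integrable_kernel_mul_comp_snd hK hK0 hcol hf.integrable_sq)).mono'
    (hK.mul (hf.1.comp_fst.mul hf.1.comp_snd)) (ae_of_all _ fun p => ?_)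
  have hab : |f p.1 * f p.2| ≤ f p.1 ^ 2 + f p.2 ^ 2 := by
    nlinarith [two_mul_le_add_sq |f p.1| |f p.2|, sq_abs (f p.1), sq_abs (f p.2),
      abs_mul (f p.1) (f p.2), abs_nonneg (f p.1 * f p.2)]
  rw [Real.norm_eq_abs, abs_mul, abs_of_nonneg (hK0 p), Pi.add_apply, ← mul_add]
  exact mul_le_mul_of_nonneg_left hab (hK0 p)

theorem integrable_kernel_mul_sub_sq :
    Integrable (fun p => K p * (f p.1 - f p.2) ^ 2) (μ.prod μ) :=
  ((integrable_kernel_mul_comp_fst hK hK0 hrow hf.integrable_sq).add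
    (integrable_kernel_mul_comp_snd hK hK0 hcol hf.integrable_sq)).sub
    ((integrable_kernel_mul_mul hK hK0 hrow hcol hf).const_mul 2)
    |>.congr (ae_of_all _ fun p => by simp only [Pi.add_apply, Pi.sub_apply]; ring)

theorem integral_kernel_mul_sub_sq :
    ∫ p, K p * (f p.1 - f p.2) ^ 2 ∂μ.prod μ =
      2 * (∫ x, f x ^ 2 ∂μ - ∫ x, f x * ∫ y, K (x, y) * f y ∂μ ∂μ) := by
  have h₁ := integrable_kernel_mul_comp_fst hK hK0 hrow hf.integrable_sq
  have h₂ := integrable_kernel_mul_comp_snd hK hK0 hcol hf.integrable_sq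
  have h₁₂ := integrable_kernel_mul_mul hK hK0 hrow hcol hf
  have hsum : Integrable (fun p => K p * f p.1 ^ 2 + K p * f p.2 ^ 2) (μ.prod μ) := h₁.add h₂
  have hexpand : (fun p => K p * (f p.1 - f p.2) ^ 2) =
      fun p => K p * f p.1 ^ 2 + K p * f p.2 ^ 2 - 2 * (K p * (f p.1 * f p.2)) := by
    ext p; ring
  rw [hexpand, integral_sub hsum (h₁₂.const_mul 2), integral_add h₁ h₂,
    integral_const_mul, integral_kernel_mul_comp_fst hK hK0 hrow hf.integrable_sq,
    integral_kernel_mul_comp_snd hK hK0 hcol hf.integrable_sq, integral_prod _ h₁₂]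
  simp_rw [mul_left_comm (K _) (f _), integral_const_mul]
  ring

end DoublyStochasticKernel

theorem exists_ae_eq_const_of_ae_eq_integral_kernel_mul {α : Type*} [MeasurableSpace α]
    {μ : Measure α} [SFinite μ] {K : α × α → ℝ} (hK : AEStronglyMeasurable K (μ.prod μ))
    (hK_pos : ∀ p, 0 < K p) (hrow : ∀ x, ∫ y, K (x, y) ∂μ = 1)
    (hcol : ∀ y, ∫ x, K (x, y) ∂μ = 1) {f : α → ℝ} (hf : MemLp f 2 μ)
    (hfix : ∀ᵐ x ∂μ, f x = ∫ y, K (x, y) * f y ∂μ) : ∃ a, f =ᵐ[μ] fun _ => a := by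
  have hK0 : ∀ p, 0 ≤ K p := fun p => (hK_pos p).le
  have hquad : ∫ x, f x * ∫ y, K (x, y) * f y ∂μ ∂μ = ∫ x, f x ^ 2 ∂μ :=
    integral_congr_ae (hfix.mono fun x hx => by dsimp only; rw [← hx, sq])
  have henergy : ∫ p, K p * (f p.1 - f p.2) ^ 2 ∂μ.prod μ = 0 := by
    rw [integral_kernel_mul_sub_sq hK hK0 hrow hcol hf, hquad, sub_self, mul_zero]
  have hdiag : ∀ᵐ p ∂μ.prod μ, f p.1 = f p.2 := by
    filter_upwards [(integral_eq_zero_iff_of_nonneg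
      (fun p => mul_nonneg (hK0 p) (sq_nonneg _))
      (integrable_kernel_mul_sub_sq hK hK0 hrow hcol hf)).1 henergy] with p hp
    simpa [(hK_pos p).ne', sub_eq_zero] using hp
  exact exists_ae_eq_const_of_ae_prod_eq hdiag

instance (n : ℕ) : SFinite (sphμ n) := by
  rw [sphμ]
  infer_instance

namespace IsScatteringKernel

variable {n : ℕ} {σ₀ : ℝ} {σ : ℝ → ℝ}

theorem pos (hσ : IsScatteringKernel n σ₀ σ) (v w : Sph n) :
    0 < σ (inner ℝ (v : Euc n) (w : Euc n)) :=
  hσ.2.1.trans_le <| hσ.2.2.1 _ <| real_inner_mem_Icc_of_norm_eq_one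
    (norm_eq_of_mem_sphere v) (norm_eq_of_mem_sphere w)

theorem integral_comp_inner_right (hσ : IsScatteringKernel n σ₀ σ) (v : Sph n) :
    ∫ w, σ (inner ℝ (v : Euc n) (w : Euc n)) ∂(sphμ n) = 1 := by
  simpa only [real_inner_comm (v : Euc n)] using hσ.2.2.2 v

theorem aestronglyMeasurable_comp_inner (hσ : IsScatteringKernel n σ₀ σ) :
    AEStronglyMeasurable (fun p : Sph n × Sph n => σ (inner ℝ (p.1 : Euc n) (p.2 : Euc n)))
      ((sphμ n).prod (sphμ n)) :=
  (hσ.1.comp (by fun_prop : Continuous fun p : Sph n × Sph n =>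
    inner ℝ (p.1 : Euc n) (p.2 : Euc n)).measurable).aestronglyMeasurable

end IsScatteringKernel

theorem scattering_null_space_general
    (n : ℕ) (σ₀ : ℝ)
    (σ : ℝ → ℝ) (hσ : IsScatteringKernel n σ₀ σ)
    (u : Sph n → ℝ) (hu : MemLp u 2 (sphμ n))
    (hfix : ∀ᵐ v ∂(sphμ n),
      u v = ∫ v' : Sph n, σ (inner ℝ (v : Euc n) (v' : Euc n)) * u v' ∂(sphμ n)) :
    ∃ a : ℝ, u =ᵐ[sphμ n] fun _ => a :=
  exists_ae_eq_const_of_ae_eq_integral_kernel_mul hσ.aestronglyMeasurable_comp_inner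
    (fun p => hσ.pos p.1 p.2) hσ.integral_comp_inner_right hσ.2.2.2 hu hfix

/-- Lemma 4.4(2): the null space of `L = I − K` consists of the
constant functions. -/
theorem scattering_null_space
    (n : ℕ) (hn : 2 ≤ n) (σ₀ : ℝ)
    (σ : ℝ → ℝ) (hσ : IsScatteringKernel n σ₀ σ)
    (u : Sph n → ℝ) (hu : MemLp u 2 (sphμ n))
    (hfix : ∀ᵐ v ∂(sphμ n),
      u v = ∫ v' : Sph n, σ (inner ℝ (v : Euc n) (v' : Euc n)) * u v' ∂(sphμ n)) :
    ∃ a : ℝ, u =ᵐ[sphμ n] fun _ => a :=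
  scattering_null_space_general n σ₀ σ hσ u hu hfix
end
end
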